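/- arXiv:2604.15080 — 2 statements merged into one kernel-verified Lean document; each statement's English description precedes it below -/
import Mathlib

section
/- Let 2 ≤ r ≤ n − 1 be integers, set δ := n − r + 1, and let C₁ and C₂ be linear codes of length n over 𝔽_q, each with minimum distance at least δ. Let C be a nonzero linear subcode of C₁ ⊗ C₂ with dimension k ≥ 2 and minimum distance d. Then d ≤ n² − k + 1 − ⌊(k−2)/(r−1)⌋ · (δ − 1). -/
open scoped Classical

/-- Hamming weight of a matrix: the number of nonzero entries. -/
noncomputable def matWeight {K : Type*} [Zero K] {m n : ℕ}
    (c : Matrix (Fin m) (Fin n) K) : ℕ :=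
  (Finset.univ.filter fun p : Fin m × Fin n => c p.1 p.2 ≠ 0).card

/-- Membership in the tensor product code `C₁ ⊗ C₂`: every column (transposed) lies in
`C₁` and every row lies in `C₂`. -/
def MemProd {K : Type*} [Field K] {m n : ℕ}
    (C₁ : Submodule K (Fin m → K)) (C₂ : Submodule K (Fin n → K))
    (c : Matrix (Fin m) (Fin n) K) : Prop :=
  (∀ j, (fun i => c i j) ∈ C₁) ∧ (∀ i, (fun j => c i j) ∈ C₂)

/-! Write `k - 2 = (r - 1) t + ℓ` with `ℓ < r - 1`. A nonzero word of `C` can be made to vanish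
at any `k - 1` prescribed positions. Prescribe `r` positions of a row `i₀`, the `r - 1` other
rows of an `r`-set of rows through `i₀` on `t - 1` columns, and `ℓ` further positions. As nonzero
words of `C₁`, `C₂` have weight `≥ n - r + 1`, a row or column with `r` zeros vanishes: first
row `i₀`, then the `t - 1` columns. This leaves at most `(n - 1)(n - t + 1) - ℓ` nonzero entries,
which is the bound. For `t = 0` it is the Singleton bound; taking all columns shows `t ≤ n`. -/

open Finset Module

theorem Finset.exists_mem_card_eq {α : Type*} [Fintype α] {r : ℕ} (hr₀ : 0 < r)
    (hr : r ≤ Fintype.card α) : ∃ a : α, ∃ A : Finset α, #A = r ∧ a ∈ A := by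
  obtain ⟨A, -, hA⟩ := exists_subset_card_eq (s := (univ : Finset α)) (n := r) hr
  obtain ⟨a, ha⟩ := card_pos.mp (hA ▸ hr₀)
  exact ⟨a, A, hA, ha⟩

theorem matWeight_le_card {K : Type*} [Zero K] {m n : ℕ} {c : Matrix (Fin m) (Fin n) K}
    {U : Finset (Fin m × Fin n)} (hU : ∀ i j, c i j ≠ 0 → (i, j) ∈ U) :
    matWeight c ≤ #U :=
  card_le_card fun p hp => hU p.1 p.2 (mem_filter.mp hp).2

section Field

variable {K : Type*} [Field K]

theorem Submodule.exists_ne_zero_forall_mem_eq_zero {m n : ℕ}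
    (C : Submodule K (Matrix (Fin m) (Fin n) K)) {S : Finset (Fin m × Fin n)}
    (hS : #S < finrank K C) : ∃ c ∈ C, c ≠ 0 ∧ ∀ p ∈ S, c p.1 p.2 = 0 := by
  let restrict : C →ₗ[K] (S → K) := LinearMap.pi fun p =>
    (LinearMap.proj p.1.2 ∘ₗ LinearMap.proj p.1.1) ∘ₗ C.subtype
  have hker : LinearMap.ker restrict ≠ ⊥ :=
    LinearMap.ker_ne_bot_of_finrank_lt (by simpa using hS)
  obtain ⟨c, hc, hc0⟩ := Submodule.exists_mem_ne_zero_of_ne_bot hker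
  exact ⟨c, c.2, fun h => hc0 (Subtype.ext h), fun p hp => congrFun hc ⟨p, hp⟩⟩

def MinDistAtLeast {n : ℕ} (W : Submodule K (Fin n → K)) (δ : ℕ) : Prop :=
  ∀ c ∈ W, c ≠ 0 → δ ≤ #{i | c i ≠ 0}

theorem MinDistAtLeast.eq_zero_of_forall_mem_eq_zero {n r : ℕ} {W : Submodule K (Fin n → K)}
    (hW : MinDistAtLeast W (n - r + 1)) {v : Fin n → K} (hv : v ∈ W)
    {T : Finset (Fin n)} (hT : r ≤ #T) (hvT : ∀ j ∈ T, v j = 0) : v = 0 := by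
  by_contra hv0
  have hsupp : #{i | v i ≠ 0} ≤ #Tᶜ :=
    card_le_card fun i hi => mem_compl.mpr fun hiT => (mem_filter.mp hi).2 (hvT i hiT)
  have := hW v hv hv0
  have := card_le_univ T
  simp only [card_compl, Fintype.card_fin] at hsupp this
  omega

theorem Submodule.exists_matWeight_add_finrank_le {m n : ℕ}
    (C : Submodule K (Matrix (Fin m) (Fin n) K)) (hC : 0 < finrank K C) :
    ∃ c ∈ C, c ≠ 0 ∧ matWeight c + finrank K C ≤ m * n + 1 := by
  obtain ⟨S, -, hS⟩ := exists_subset_card_eq (s := (univ : Finset (Fin m × Fin n)))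
    (n := finrank K C - 1) (by
      have := C.finrank_le
      simp only [card_univ, Fintype.card_prod, Fintype.card_fin]
      simp only [finrank_matrix, Fintype.card_fin, finrank_self, mul_one] at this
      omega)
  obtain ⟨c, hcC, hc0, hcS⟩ := C.exists_ne_zero_forall_mem_eq_zero (S := S) (by omega)
  have hw : matWeight c ≤ #Sᶜ :=
    matWeight_le_card fun i j hij => mem_compl.mpr fun h => hij (hcS (i, j) h)
  refine ⟨c, hcC, hc0, ?_⟩
  have := card_le_univ S
  simp only [card_compl, Fintype.card_prod, Fintype.card_fin] at hw this
  omega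

section Tensor

variable {n r : ℕ} {C₁ C₂ : Submodule K (Fin n → K)}

theorem MemProd.mem_compl_product_of_ne_zero
    (hC₁ : MinDistAtLeast C₁ (n - r + 1)) (hC₂ : MinDistAtLeast C₂ (n - r + 1))
    {c : Matrix (Fin n) (Fin n) K} (hc : MemProd C₁ C₂ c) {i₀ : Fin n} {A Col : Finset (Fin n)}
    (hA : r ≤ #A) (hcS : ∀ p ∈ {i₀} ×ˢ A ∪ A.erase i₀ ×ˢ Col, c p.1 p.2 = 0)
    {i j : Fin n} (hij : c i j ≠ 0) : (i, j) ∈ {i₀}ᶜ ×ˢ Colᶜ := by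
  have hrow : ∀ j, c i₀ j = 0 := congrFun <|
    hC₂.eq_zero_of_forall_mem_eq_zero (hc.2 i₀) hA fun j hj => hcS (i₀, j) (by simp [hj])
  have hcol : ∀ j ∈ Col, ∀ i, c i j = 0 := fun j hj => congrFun <|
    hC₁.eq_zero_of_forall_mem_eq_zero (hc.1 j) hA fun i hi => by
      by_cases h : i = i₀
      · exact h ▸ hrow j
      · exact hcS (i, j) (by simp [h, hi, hj])
  simp only [mem_product, mem_compl, mem_singleton]
  exact ⟨fun h => hij (h ▸ hrow j), fun hj => hij (hcol j hj i)⟩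

variable {C : Submodule K (Matrix (Fin n) (Fin n) K)}

theorem exists_ne_zero_mem_compl_product_sdiff
    (hC₁ : MinDistAtLeast C₁ (n - r + 1)) (hC₂ : MinDistAtLeast C₂ (n - r + 1))
    (hC : ∀ c ∈ C, MemProd C₁ C₂ c) {i₀ : Fin n} {A Col : Finset (Fin n)} (hA : #A = r)
    (hi₀ : i₀ ∈ A) {F : Finset (Fin n × Fin n)} (hk : r + (r - 1) * #Col + #F < finrank K C) :
    ∃ c ∈ C, c ≠ 0 ∧ ∀ i j, c i j ≠ 0 → (i, j) ∈ {i₀}ᶜ ×ˢ Colᶜ \ F := by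
  have hS : #({i₀} ×ˢ A ∪ A.erase i₀ ×ˢ Col ∪ F) < finrank K C := by
    calc #({i₀} ×ˢ A ∪ A.erase i₀ ×ˢ Col ∪ F)
        ≤ #({i₀} ×ˢ A) + #(A.erase i₀ ×ˢ Col) + #F := by
          grw [card_union_le, card_union_le]
      _ = r + (r - 1) * #Col + #F := by simp [card_product, card_erase_of_mem hi₀, hA]
      _ < finrank K C := hk
  obtain ⟨c, hcC, hc0, hcS⟩ := C.exists_ne_zero_forall_mem_eq_zero hS
  refine ⟨c, hcC, hc0, fun i j hij => mem_sdiff.mpr ⟨?_, fun hF => hij (hcS (i, j) ?_)⟩⟩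
  · exact (hC c hcC).mem_compl_product_of_ne_zero hC₁ hC₂ hA.ge
      (fun p hp => hcS p (mem_union_left _ hp)) hij
  · exact mem_union_right _ hF

theorem finrank_le_of_forall_memProd
    (hC₁ : MinDistAtLeast C₁ (n - r + 1)) (hC₂ : MinDistAtLeast C₂ (n - r + 1))
    (hC : ∀ c ∈ C, MemProd C₁ C₂ c) (hr₀ : 0 < r) (hrn : r ≤ n) :
    finrank K C ≤ r + (r - 1) * n := by
  obtain ⟨i₀, A, hA, hi₀⟩ := exists_mem_card_eq (α := Fin n) hr₀ (by simpa using hrn)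
  by_contra! hk
  obtain ⟨c, -, hc0, hc⟩ := exists_ne_zero_mem_compl_product_sdiff hC₁ hC₂ hC hA hi₀
    (Col := univ) (F := ∅) (by simpa using hk)
  exact hc0 (Matrix.ext fun i j => by_contra fun hij => by simpa using hc i j hij)

theorem exists_matWeight_add_le_of_forall_memProd
    (hC₁ : MinDistAtLeast C₁ (n - r + 1)) (hC₂ : MinDistAtLeast C₂ (n - r + 1))
    (hC : ∀ c ∈ C, MemProd C₁ C₂ c) (hr₀ : 0 < r) (hrn : r ≤ n) {s ℓ : ℕ} (hs : s ≤ n)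
    (hℓ : ℓ ≤ (n - 1) * (n - s)) (hk : r + (r - 1) * s + ℓ < finrank K C) :
    ∃ c ∈ C, c ≠ 0 ∧ matWeight c + ℓ ≤ (n - 1) * (n - s) := by
  obtain ⟨i₀, A, hA, hi₀⟩ := exists_mem_card_eq (α := Fin n) hr₀ (by simpa using hrn)
  obtain ⟨Col, -, hCol⟩ := exists_subset_card_eq (s := (univ : Finset (Fin n))) (n := s)
    (by simpa using hs)
  have hX : #({i₀}ᶜ ×ˢ Colᶜ) = (n - 1) * (n - s) := by simp [card_product, card_compl, hCol]
  obtain ⟨F, hFX, hF⟩ := exists_subset_card_eq (hX ▸ hℓ)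
  obtain ⟨c, hcC, hc0, hc⟩ := exists_ne_zero_mem_compl_product_sdiff hC₁ hC₂ hC hA hi₀
    (Col := Col) (F := F) (by rwa [hCol, hF])
  have hw := matWeight_le_card hc
  rw [card_sdiff_of_subset hFX, hX, hF] at hw
  exact ⟨c, hcC, hc0, by omega⟩

end Tensor

end Field

theorem stmt_17_general (K : Type*) [Field K]
    (n r : ℕ) (hrn : r ≤ n - 1)
    (C₁ C₂ : Submodule K (Fin n → K))
    (hC₁ : ∀ c ∈ C₁, c ≠ 0 → n - r + 1 ≤ (Finset.univ.filter fun i => c i ≠ 0).card)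
    (hC₂ : ∀ c ∈ C₂, c ≠ 0 → n - r + 1 ≤ (Finset.univ.filter fun i => c i ≠ 0).card)
    (C : Submodule K (Matrix (Fin n) (Fin n) K))
    (hC : ∀ c ∈ C, MemProd C₁ C₂ c)
    (k : ℕ) (hk : Module.finrank K ↥C = k) (hk2 : 2 ≤ k)
    (d : ℕ) (hd : IsLeast {w : ℕ | ∃ c ∈ C, c ≠ 0 ∧ matWeight c = w} d) :
    (d : ℤ) ≤ (n : ℤ) ^ 2 - (k : ℤ) + 1 - (((k - 2) / (r - 1) : ℕ) : ℤ) * ((n : ℤ) - r) := by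
  have hd_le {c} (hcC : c ∈ C) (hc0 : c ≠ 0) : d ≤ matWeight c := hd.2 ⟨c, hcC, hc0, rfl⟩
  rcases Nat.eq_zero_or_pos ((k - 2) / (r - 1)) with ht | ht
  · obtain ⟨c, hcC, hc0, hw⟩ := C.exists_matWeight_add_finrank_le (by omega)
    have := hd_le hcC hc0
    rw [ht, sq]
    push_cast
    omega
  obtain ⟨hr, -⟩ := Nat.div_pos_iff.mp ht
  have hdiv := Nat.div_add_mod (k - 2) (r - 1)
  have hℓ := Nat.mod_lt (k - 2) hr
  generalize (k - 2) / (r - 1) = t at ht hdiv ⊢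
  generalize (k - 2) % (r - 1) = ℓ at hdiv hℓ
  obtain ⟨s, rfl⟩ : ∃ s, t = s + 1 := ⟨t - 1, by omega⟩
  have hsn : s < n := by
    have := hk ▸ finrank_le_of_forall_memProd hC₁ hC₂ hC (by omega) (by omega)
    have : (r - 1) * (s + 1) < (r - 1) * (n + 1) := by simp only [Nat.mul_succ] at hdiv ⊢; omega
    exact Nat.lt_of_succ_lt_succ (Nat.lt_of_mul_lt_mul_left this)
  obtain ⟨c, hcC, hc0, hw⟩ := exists_matWeight_add_le_of_forall_memProd hC₁ hC₂ hC
    (by omega) (by omega) (s := s) (ℓ := ℓ) hsn.le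
    (by have := Nat.le_mul_of_pos_right (n - 1) (show 0 < n - s by omega); omega)
    (by rw [Nat.mul_succ] at hdiv; omega)
  have := hd_le hcC hc0
  zify [show 1 ≤ n by omega, show 1 ≤ r by omega, hsn.le, hk2] at hw this hdiv ⊢
  linarith

/-- Let `2 ≤ r ≤ n − 1`, set `δ := n − r + 1`, let `C₁, C₂` be linear
codes of length `n` over a finite field, each of minimum distance at least `δ`, and let
`C ⊆ C₁ ⊗ C₂` be a nonzero linear subcode of dimension `k ≥ 2` and minimum distance `d`.
Then `d ≤ n² − k + 1 − ⌊(k−2)/(r−1)⌋·(δ − 1)`, where `δ − 1 = n − r`. -/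
theorem stmt_17 (q : ℕ) (K : Type*) [Field K] [Fintype K] (hq : Fintype.card K = q)
    (n r : ℕ) (h2 : 2 ≤ r) (hrn : r ≤ n - 1)
    (C₁ C₂ : Submodule K (Fin n → K))
    (hC₁ : ∀ c ∈ C₁, c ≠ 0 → n - r + 1 ≤ (Finset.univ.filter fun i => c i ≠ 0).card)
    (hC₂ : ∀ c ∈ C₂, c ≠ 0 → n - r + 1 ≤ (Finset.univ.filter fun i => c i ≠ 0).card)
    (C : Submodule K (Matrix (Fin n) (Fin n) K))
    (hC : ∀ c ∈ C, MemProd C₁ C₂ c) (hCne : C ≠ ⊥)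
    (k : ℕ) (hk : Module.finrank K ↥C = k) (hk2 : 2 ≤ k)
    (d : ℕ) (hd : IsLeast {w : ℕ | ∃ c ∈ C, c ≠ 0 ∧ matWeight c = w} d) :
    (d : ℤ) ≤ (n : ℤ) ^ 2 - (k : ℤ) + 1 - (((k - 2) / (r - 1) : ℕ) : ℤ) * ((n : ℤ) - r) :=
  stmt_17_general K n r hrn C₁ C₂ hC₁ hC₂ C hC k hk hk2 d hd
end

section
/- Let r and n be integers with 3 ≤ r ≤ n and n ≥ 2, and let D := { t·n + ℓ : t, ℓ integers with 0 ≤ t ≤ 2(r−1), 0 ≤ ℓ ≤ r − 1 − ⌈t/2⌉ }. Then the largest element of D is (2r−2)·n, the second-largest element of D is (2r−3)·n, and the third-largest element of D is (2r−4)·n + 1. -/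
/-- The degree set `D = { t·n + ℓ : 0 ≤ t ≤ 2(r-1), 0 ≤ ℓ ≤ r - 1 - ⌈t/2⌉ }`
(note `⌈t/2⌉ = (t+1)/2` in natural-number arithmetic). -/
def Dset (n r : ℕ) : Finset ℕ :=
  (Finset.range (2 * (r - 1) + 1)).biUnion fun t =>
    (Finset.range (r - (t + 1) / 2)).image fun ℓ => t * n + ℓ

lemma dset_mem (n r t ℓ : ℕ) (ht : t < 2 * (r - 1) + 1) (hl : ℓ < r - (t + 1) / 2) :
    t * n + ℓ ∈ Dset n r := by
  simp only [Dset, Finset.mem_biUnion, Finset.mem_image, Finset.mem_range]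
  exact ⟨t, ht, ℓ, hl, rfl⟩

lemma dset_step (a t n ℓ : ℕ) (ht : t ≤ a) (hl : ℓ ≤ n) : t * n + ℓ ≤ (a + 1) * n := by
  calc t * n + ℓ ≤ a * n + n := add_le_add (Nat.mul_le_mul_right _ ht) hl
    _ = (a + 1) * n := by ring

/-- Let `3 ≤ r ≤ n` and `n ≥ 2`, and let
`D = { t·n + ℓ : 0 ≤ t ≤ 2(r−1), 0 ≤ ℓ ≤ r − 1 − ⌈t/2⌉ }`.  Then the largest element
of `D` is `(2r−2)·n`, the second-largest element of `D` is `(2r−3)·n`, and the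
third-largest element of `D` is `(2r−4)·n + 1`. -/
theorem stmt_19 (r n : ℕ) (h3 : 3 ≤ r) (hrn : r ≤ n) (hn : 2 ≤ n) :
    ((2 * r - 2) * n ∈ Dset n r ∧ ∀ x ∈ Dset n r, x ≤ (2 * r - 2) * n) ∧
    ((2 * r - 3) * n ∈ Dset n r ∧
      ∀ x ∈ Dset n r, x ≠ (2 * r - 2) * n → x ≤ (2 * r - 3) * n) ∧
    ((2 * r - 4) * n + 1 ∈ Dset n r ∧
      ∀ x ∈ Dset n r, x ≠ (2 * r - 2) * n → x ≠ (2 * r - 3) * n →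
        x ≤ (2 * r - 4) * n + 1) := by
  have hmem : ∀ x ∈ Dset n r, ∃ t ℓ, t < 2 * (r - 1) + 1 ∧ ℓ < r - (t + 1) / 2 ∧
      x = t * n + ℓ := by
    intro x hx
    simp only [Dset, Finset.mem_biUnion, Finset.mem_image, Finset.mem_range] at hx
    obtain ⟨t, ht, ℓ, hl, hx⟩ := hx
    exact ⟨t, ℓ, ht, hl, hx.symm⟩
  refine ⟨⟨?_, ?_⟩, ⟨?_, ?_⟩, ⟨?_, ?_⟩⟩
  · have := dset_mem n r (2 * r - 2) 0 (by omega) (by omega)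
    simpa using this
  · intro x hx
    obtain ⟨t, ℓ, ht, hl, rfl⟩ := hmem x hx
    by_cases h : t = 2 * r - 2
    · subst h
      have : ℓ = 0 := by omega
      simp [this]
    · have ht' : t ≤ 2 * r - 3 := by omega
      have hl' : ℓ ≤ n := by omega
      have := dset_step (2 * r - 3) t n ℓ ht' hl'
      have e : 2 * r - 3 + 1 = 2 * r - 2 := by omega
      rwa [e] at this
  · have := dset_mem n r (2 * r - 3) 0 (by omega) (by omega)
    simpa using this
  · intro x hx hne
    obtain ⟨t, ℓ, ht, hl, rfl⟩ := hmem x hx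
    have h1 : t ≠ 2 * r - 2 := by
      rintro rfl
      have : ℓ = 0 := by omega
      simp [this] at hne
    by_cases h : t = 2 * r - 3
    · subst h
      have : ℓ = 0 := by omega
      simp [this]
    · have ht' : t ≤ 2 * r - 4 := by omega
      have hl' : ℓ ≤ n := by omega
      have := dset_step (2 * r - 4) t n ℓ ht' hl'
      have e : 2 * r - 4 + 1 = 2 * r - 3 := by omega
      rwa [e] at this
  · exact dset_mem n r (2 * r - 4) 1 (by omega) (by omega)
  · intro x hx hne1 hne2
    obtain ⟨t, ℓ, ht, hl, rfl⟩ := hmem x hx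
    have h1 : t ≠ 2 * r - 2 := by
      rintro rfl
      have : ℓ = 0 := by omega
      simp [this] at hne1
    have h2 : t ≠ 2 * r - 3 := by
      rintro rfl
      have : ℓ = 0 := by omega
      simp [this] at hne2
    by_cases h : t = 2 * r - 4
    · subst h
      have : ℓ ≤ 1 := by omega
      omega
    · have ht' : t ≤ 2 * r - 5 := by omega
      have hl' : ℓ ≤ n := by omega
      have := dset_step (2 * r - 5) t n ℓ ht' hl'
      have e : 2 * r - 5 + 1 = 2 * r - 4 := by omega
      rw [e] at this
      omega
end
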